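/- Hidden variable elimination: in the optimised big-step semantics with split environments, adding a binding (x,l') to the non-tail environment is irrelevant when x is already bound in the tail environment. Formally, for all locations l, l': M, s ⇓_{(ρT·(x,l) | ρ), F} v, s' if and only if M, s ⇓_{(ρT·(x,l) | (x,l')·ρ), F} v, s'; moreover both derivations have the same height. -/

import Mathlib

namespace CPC

abbrev Loc := Nat
abbrev Var := String

inductive Val : Type
  | unit | tt | ff
  | nat (n : Nat)
deriving DecidableEq

inductive Tm : Type
  | val (v : Val)
  | var (x : Var)
  | assign (x : Var) (t : Tm)
  | ite (c t e : Tm)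
  | seq (a b : Tm)
  | letrec (f : Var) (ps : List Var) (body rest : Tm)
  | call (f : Var) (args : List Tm)

abbrev Env := Var → Option Loc
abbrev Store := Loc → Option Val

def emptyEnv : Env := fun _ => none
def emptyStore : Store := fun _ => none

/-- Modification (extension) of a partial function. -/
def updFn {α β : Type} [DecidableEq α] (f : α → Option β) (x : α) (y : β) :
    α → Option β :=
  fun t => if t = x then some y else f t

/-- Concatenation of environments: leftmost binding wins. -/
def envCat (ρ₁ ρ₂ : Env) : Env := fun x => (ρ₁ x).orElse (fun _ => ρ₂ x)

def single (x : Var) (l : Loc) : Env := updFn emptyEnv x l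

def envIm (ρ : Env) : Set Loc := {l | ∃ x, ρ x = some l}
def envDom (ρ : Env) : Set Var := {x | ρ x ≠ none}
def storeDom (s : Store) : Set Loc := {l | s l ≠ none}

open Classical in
/-- Cleaning of a store with respect to an environment. -/
noncomputable def clean (ρ : Env) (s : Store) : Store :=
  fun l => if l ∈ envIm ρ then none else s l

open Classical in
/-- Restriction of a store to a set of locations. -/
noncomputable def resStore (s : Store) (D : Set Loc) : Store :=
  fun l => if l ∈ D then s l else none

/-- Store extension: `t` agrees with `s` on `dom s`. -/
def StoreLe (s t : Store) : Prop := ∀ l ∈ storeDom s, t l = s l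

/-- Environment binding a list of variables to a list of locations. -/
def envOf (xs : List Var) (ls : List Loc) : Env := fun y => (xs.zip ls).lookup y

/-- Store updated with a list of locations bound to a list of values. -/
def updStore (s : Store) (ls : List Loc) (vs : List Val) : Store :=
  fun l => ((ls.zip vs).lookup l).orElse (fun _ => s l)

/-- Closures: parameters, body, captured variable environment,
    captured function environment. -/
inductive Clos : Type
  | mk (ps : List Var) (body : Tm) (ρ : Env) (F : List (Var × Clos))

abbrev FEnv := List (Var × Clos)

def lookupF (F : FEnv) (f : Var) : Option Clos := F.lookup f

/-- `LocIn l F`: the location `l` appears in `F`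
    (in some environment captured, recursively, in a closure of `F`). -/
inductive LocIn : Loc → FEnv → Prop
  | env {l : Loc} {F : FEnv} {f ps body ρ F'} :
      (f, Clos.mk ps body ρ F') ∈ F → l ∈ envIm ρ → LocIn l F
  | deep {l : Loc} {F : FEnv} {f ps body ρ F'} :
      (f, Clos.mk ps body ρ F') ∈ F → LocIn l F' → LocIn l F

/-! ### Naive big-step reduction rules (with derivation height) -/

mutual
inductive EvalN : Nat → Env → FEnv → Tm → Store → Val → Store → Prop
  | val {ρ : Env} {F : FEnv} {v s} : EvalN 1 ρ F (.val v) s v s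
  | var {ρ : Env} {F : FEnv} {x l s w} :
      ρ x = some l → s l = some w → EvalN 1 ρ F (.var x) s w s
  | assign {n} {ρ : Env} {F : FEnv} {a s v s' x l} :
      EvalN n ρ F a s v s' → ρ x = some l → l ∈ storeDom s' →
      EvalN (n+1) ρ F (.assign x a) s .unit (updFn s' l v)
  | seq {n m} {ρ : Env} {F : FEnv} {a b s v s' v' s''} :
      EvalN n ρ F a s v s' → EvalN m ρ F b s' v' s'' →
      EvalN (n+m+1) ρ F (.seq a b) s v' s''
  | ifT {n m} {ρ : Env} {F : FEnv} {c b e s s' v s''} :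
      EvalN n ρ F c s .tt s' → EvalN m ρ F b s' v s'' →
      EvalN (n+m+1) ρ F (.ite c b e) s v s''
  | ifF {n m} {ρ : Env} {F : FEnv} {c b e s s' v s''} :
      EvalN n ρ F c s .ff s' → EvalN m ρ F e s' v s'' →
      EvalN (n+m+1) ρ F (.ite c b e) s v s''
  | letrec {n} {ρ : Env} {F : FEnv} {f ps a b s v s'} :
      EvalN n ρ ((f, Clos.mk ps a ρ F) :: F) b s v s' →
      EvalN (n+1) ρ F (.letrec f ps a b) s v s'
  | call {n m} {ρ : Env} {F : FEnv} {f args s₁ vs s₂ xs b} {ρ' : Env} {F' : FEnv}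
      {ls : List Loc} {v s'} :
      lookupF F f = some (Clos.mk xs b ρ' F') →
      EvalNArgs n ρ F args s₁ vs s₂ →
      ls.length = xs.length → vs.length = xs.length → ls.Nodup →
      (∀ l ∈ ls, l ∉ storeDom s₂ ∧ ¬ LocIn l ((f, Clos.mk xs b ρ' F') :: F')) →
      EvalN m (envCat (envOf xs ls) ρ') ((f, Clos.mk xs b ρ' F') :: F')
        b (updStore s₂ ls vs) v s' →
      EvalN (n+m+1) ρ F (.call f args) s₁ v s'

inductive EvalNArgs : Nat → Env → FEnv → List Tm → Store → List Val → Store → Prop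
  | nil {ρ : Env} {F : FEnv} {s} : EvalNArgs 0 ρ F [] s [] s
  | cons {n m} {ρ : Env} {F : FEnv} {a as s v s' vs s''} :
      EvalN n ρ F a s v s' → EvalNArgs m ρ F as s' vs s'' →
      EvalNArgs (n+m) ρ F (a :: as) s (v :: vs) s''
end

/-! ### Intermediate big-step reduction rules (split environments,
      minimal stores, non-compact closures) -/

mutual
inductive EvalI : Nat → Env → Env → FEnv → Tm → Store → Val → Store → Prop
  | val {ρT ρ : Env} {F : FEnv} {v s} :
      EvalI 1 ρT ρ F (.val v) s v (clean ρT s)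
  | var {ρT ρ : Env} {F : FEnv} {x l s w} :
      envCat ρT ρ x = some l → s l = some w →
      EvalI 1 ρT ρ F (.var x) s w (clean ρT s)
  | assign {n} {ρT ρ : Env} {F : FEnv} {a s v s' x l} :
      EvalI n emptyEnv (envCat ρT ρ) F a s v s' →
      envCat ρT ρ x = some l → l ∈ storeDom s' →
      EvalI (n+1) ρT ρ F (.assign x a) s .unit (clean ρT (updFn s' l v))
  | seq {n m} {ρT ρ : Env} {F : FEnv} {a b s v s' v' s''} :
      EvalI n emptyEnv (envCat ρT ρ) F a s v s' → EvalI m ρT ρ F b s' v' s'' →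
      EvalI (n+m+1) ρT ρ F (.seq a b) s v' s''
  | ifT {n m} {ρT ρ : Env} {F : FEnv} {c b e s s' v s''} :
      EvalI n emptyEnv (envCat ρT ρ) F c s .tt s' → EvalI m ρT ρ F b s' v s'' →
      EvalI (n+m+1) ρT ρ F (.ite c b e) s v s''
  | ifF {n m} {ρT ρ : Env} {F : FEnv} {c b e s s' v s''} :
      EvalI n emptyEnv (envCat ρT ρ) F c s .ff s' → EvalI m ρT ρ F e s' v s'' →
      EvalI (n+m+1) ρT ρ F (.ite c b e) s v s''
  | letrec {n} {ρT ρ : Env} {F : FEnv} {f ps a b s v s'} :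
      EvalI n ρT ρ ((f, Clos.mk ps a (envCat ρT ρ) F) :: F) b s v s' →
      EvalI (n+1) ρT ρ F (.letrec f ps a b) s v s'
  | call {n m} {ρT ρ : Env} {F : FEnv} {f args s₁ vs s₂ xs b} {ρ' : Env} {F' : FEnv}
      {ls : List Loc} {v s'} :
      lookupF F f = some (Clos.mk xs b ρ' F') →
      EvalIArgs n (envCat ρT ρ) F args s₁ vs s₂ →
      ls.length = xs.length → vs.length = xs.length → ls.Nodup →
      (∀ l ∈ ls, l ∉ storeDom s₂ ∧ ¬ LocIn l ((f, Clos.mk xs b ρ' F') :: F')) →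
      EvalI m (envOf xs ls) ρ' ((f, Clos.mk xs b ρ' F') :: F')
        b (updStore s₂ ls vs) v s' →
      EvalI (n+m+1) ρT ρ F (.call f args) s₁ v (clean ρT s')

inductive EvalIArgs : Nat → Env → FEnv → List Tm → Store → List Val → Store → Prop
  | nil {ρ : Env} {F : FEnv} {s} : EvalIArgs 0 ρ F [] s [] s
  | cons {n m} {ρ : Env} {F : FEnv} {a as s v s' vs s''} :
      EvalI n emptyEnv ρ F a s v s' → EvalIArgs m ρ F as s' vs s'' →
      EvalIArgs (n+m) ρ F (a :: as) s (v :: vs) s''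
end

/-- Restriction of an environment outside a list of variables. -/
def restrictEnv (ρ : Env) (ps : List Var) : Env :=
  fun x => if x ∈ ps then none else ρ x

/-! ### Optimised big-step reduction rules (minimal stores and compact
      closures): identical to the intermediate rules except that the
      (letrec) rule builds compact closures -/

mutual
inductive EvalO : Nat → Env → Env → FEnv → Tm → Store → Val → Store → Prop
  | val {ρT ρ : Env} {F : FEnv} {v s} :
      EvalO 1 ρT ρ F (.val v) s v (clean ρT s)
  | var {ρT ρ : Env} {F : FEnv} {x l s w} :
      envCat ρT ρ x = some l → s l = some w →
      EvalO 1 ρT ρ F (.var x) s w (clean ρT s)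
  | assign {n} {ρT ρ : Env} {F : FEnv} {a s v s' x l} :
      EvalO n emptyEnv (envCat ρT ρ) F a s v s' →
      envCat ρT ρ x = some l → l ∈ storeDom s' →
      EvalO (n+1) ρT ρ F (.assign x a) s .unit (clean ρT (updFn s' l v))
  | seq {n m} {ρT ρ : Env} {F : FEnv} {a b s v s' v' s''} :
      EvalO n emptyEnv (envCat ρT ρ) F a s v s' → EvalO m ρT ρ F b s' v' s'' →
      EvalO (n+m+1) ρT ρ F (.seq a b) s v' s''
  | ifT {n m} {ρT ρ : Env} {F : FEnv} {c b e s s' v s''} :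
      EvalO n emptyEnv (envCat ρT ρ) F c s .tt s' → EvalO m ρT ρ F b s' v s'' →
      EvalO (n+m+1) ρT ρ F (.ite c b e) s v s''
  | ifF {n m} {ρT ρ : Env} {F : FEnv} {c b e s s' v s''} :
      EvalO n emptyEnv (envCat ρT ρ) F c s .ff s' → EvalO m ρT ρ F e s' v s'' →
      EvalO (n+m+1) ρT ρ F (.ite c b e) s v s''
  | letrec {n} {ρT ρ : Env} {F : FEnv} {f ps a b s v s'} :
      EvalO n ρT ρ ((f, Clos.mk ps a (restrictEnv (envCat ρT ρ) ps) F) :: F) b s v s' →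
      EvalO (n+1) ρT ρ F (.letrec f ps a b) s v s'
  | call {n m} {ρT ρ : Env} {F : FEnv} {f args s₁ vs s₂ xs b} {ρ' : Env} {F' : FEnv}
      {ls : List Loc} {v s'} :
      lookupF F f = some (Clos.mk xs b ρ' F') →
      EvalOArgs n (envCat ρT ρ) F args s₁ vs s₂ →
      ls.length = xs.length → vs.length = xs.length → ls.Nodup →
      (∀ l ∈ ls, l ∉ storeDom s₂ ∧ ¬ LocIn l ((f, Clos.mk xs b ρ' F') :: F')) →
      EvalO m (envOf xs ls) ρ' ((f, Clos.mk xs b ρ' F') :: F')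
        b (updStore s₂ ls vs) v s' →
      EvalO (n+m+1) ρT ρ F (.call f args) s₁ v (clean ρT s')

inductive EvalOArgs : Nat → Env → FEnv → List Tm → Store → List Val → Store → Prop
  | nil {ρ : Env} {F : FEnv} {s} : EvalOArgs 0 ρ F [] s [] s
  | cons {n m} {ρ : Env} {F : FEnv} {a as s v s' vs s''} :
      EvalO n emptyEnv ρ F a s v s' → EvalOArgs m ρ F as s' vs s'' →
      EvalOArgs (n+m) ρ F (a :: as) s (v :: vs) s''
end

/-! The rules consult the non-tail environment `ρ` only through the concatenation `ρT·ρ`, and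
in that concatenation a binding of `x` in `ρ` is shadowed as soon as `x` is bound in `ρT`. -/

theorem envCat_envCat_of_envDom_subset {ρT ρ' : Env} (hdom : envDom ρ' ⊆ envDom ρT) (ρ : Env) :
    envCat ρT (envCat ρ' ρ) = envCat ρT ρ := by
  funext y
  cases hy : ρT y with
  | some _ => simp [envCat, hy]
  | none =>
    have : ρ' y = none := by_contra fun h => hdom h hy
    simp [envCat, hy, this]

theorem envDom_single_subset_envDom_envCat (ρT : Env) (x : Var) (l l' : Loc) :
    envDom (single x l') ⊆ envDom (envCat ρT (single x l)) := by
  intro y hy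
  have hyx : y = x := by_contra fun h => hy (by simp [single, updFn, emptyEnv, h])
  cases ρT y <;> simp [envDom, envCat, single, updFn, hyx]

theorem EvalO.of_envCat_eq {n : Nat} {ρT ρ₁ ρ₂ : Env} {F : FEnv} {M : Tm} {s s' : Store}
    {v : Val} (heq : envCat ρT ρ₁ = envCat ρT ρ₂) (h : EvalO n ρT ρ₁ F M s v s') :
    EvalO n ρT ρ₂ F M s v s' := by
  induction n using Nat.strong_induction_on generalizing F M s v s' with
  | _ n ih =>
    cases h with
    | val => exact .val
    | var hx hw => rw [heq] at hx; exact .var hx hw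
    | assign ha hx hl => rw [heq] at ha hx; exact .assign ha hx hl
    | seq ha hb => rw [heq] at ha; exact .seq ha (ih _ (by omega) hb)
    | ifT hc hb => rw [heq] at hc; exact .ifT hc (ih _ (by omega) hb)
    | ifF hc he => rw [heq] at hc; exact .ifF hc (ih _ (by omega) he)
    | letrec hb => rw [heq] at hb; exact .letrec (ih _ (by omega) hb)
    | call hf hargs hls hvs hnd hfresh hb =>
      rw [heq] at hargs; exact .call hf hargs hls hvs hnd hfresh hb

theorem EvalI.of_envCat_eq {n : Nat} {ρT ρ₁ ρ₂ : Env} {F : FEnv} {M : Tm} {s s' : Store}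
    {v : Val} (heq : envCat ρT ρ₁ = envCat ρT ρ₂) (h : EvalI n ρT ρ₁ F M s v s') :
    EvalI n ρT ρ₂ F M s v s' := by
  induction n using Nat.strong_induction_on generalizing F M s v s' with
  | _ n ih =>
    cases h with
    | val => exact .val
    | var hx hw => rw [heq] at hx; exact .var hx hw
    | assign ha hx hl => rw [heq] at ha hx; exact .assign ha hx hl
    | seq ha hb => rw [heq] at ha; exact .seq ha (ih _ (by omega) hb)
    | ifT hc hb => rw [heq] at hc; exact .ifT hc (ih _ (by omega) hb)
    | ifF hc he => rw [heq] at hc; exact .ifF hc (ih _ (by omega) he)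
    | letrec hb => rw [heq] at hb; exact .letrec (ih _ (by omega) hb)
    | call hf hargs hls hvs hnd hfresh hb =>
      rw [heq] at hargs; exact .call hf hargs hls hvs hnd hfresh hb

/-- hidden variable elimination.  Adding a binding `(x,l')`
to the non-tail environment is irrelevant when `x` is already bound in
the tail environment; both derivations have the same height.  This holds
for the optimised as well as for the intermediate reduction rules. -/
theorem hidden_variable_elimination
    (x : Var) (l l' : Loc) (ρT ρ : Env) (F : FEnv)
    (M : Tm) (s s' : Store) (v : Val) (n : Nat) :
    (EvalO n (envCat ρT (single x l)) ρ F M s v s' ↔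
      EvalO n (envCat ρT (single x l)) (envCat (single x l') ρ) F M s v s') ∧
    (EvalI n (envCat ρT (single x l)) ρ F M s v s' ↔
      EvalI n (envCat ρT (single x l)) (envCat (single x l') ρ) F M s v s') := by
  have heq := (envCat_envCat_of_envDom_subset (envDom_single_subset_envDom_envCat ρT x l l') ρ).symm
  exact ⟨⟨.of_envCat_eq heq, .of_envCat_eq heq.symm⟩, ⟨.of_envCat_eq heq, .of_envCat_eq heq.symm⟩⟩

end CPC
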